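/- arXiv:1907.03147 — 7 statements merged into one kernel-verified Lean document; each statement's English description precedes it below -/
import Mathlib

section
/- Let q be an odd prime and let x, y be positive rational numbers with x² + qy² = 1. Then every odd prime factor p of the least common denominator of x and y satisfies that −q is a quadratic residue modulo p (in particular p ≠ q and p is odd). -/
/-!
Clearing denominators with `c = lcm(den x, den y)` gives integers `a = c x`, `b = c y` with
`a² + q b² = c²`, and minimality of `c` says that no prime factor `p` of `c` divides both `a`
and `b`. Reducing modulo `p` gives `a² + q b² ≡ 0` with `b ≢ 0`, so `-q ≡ (a / b)²`; and
`p = q` is impossible, since then `p ∣ a` and `p² ∣ p b²` would force `p ∣ b`.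
-/

theorem Rat.den_dvd_iff_exists_mul_eq_intCast {x : ℚ} {m : ℕ} :
    x.den ∣ m ↔ ∃ a : ℤ, x * m = a := by
  constructor
  · rintro ⟨k, rfl⟩
    exact ⟨x.num * k, by push_cast; rw [← mul_assoc, Rat.mul_den_eq_num]⟩
  · rintro ⟨a, ha⟩
    rcases eq_or_ne m 0 with rfl | hm
    · exact dvd_zero _
    have hx : x = Rat.divInt a m := by
      rw [Rat.divInt_eq_div, Int.cast_natCast, ← ha]
      field_simp
    exact_mod_cast hx ▸ Rat.den_dvd a m

theorem Rat.not_dvd_and_dvd_of_mul_lcm_den_eq {x y : ℚ} {a b : ℤ}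
    (ha : x * (Nat.lcm x.den y.den : ℕ) = a) (hb : y * (Nat.lcm x.den y.den : ℕ) = b)
    {p : ℕ} (hp : 1 < p) (hpc : p ∣ Nat.lcm x.den y.den) :
    ¬ ((p : ℤ) ∣ a ∧ (p : ℤ) ∣ b) := by
  rintro ⟨⟨a', rfl⟩, ⟨b', rfl⟩⟩
  obtain ⟨m, hm⟩ := hpc
  have hp0 : (p : ℚ) ≠ 0 := by positivity
  have hxm : x * m = a' := mul_left_cancel₀ hp0 <| by
    rw [← mul_assoc, mul_comm _ x, mul_assoc]; exact_mod_cast hm ▸ ha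
  have hym : y * m = b' := mul_left_cancel₀ hp0 <| by
    rw [← mul_assoc, mul_comm _ y, mul_assoc]; exact_mod_cast hm ▸ hb
  have hcm : Nat.lcm x.den y.den ∣ m :=
    Nat.lcm_dvd (Rat.den_dvd_iff_exists_mul_eq_intCast.2 ⟨a', hxm⟩)
      (Rat.den_dvd_iff_exists_mul_eq_intCast.2 ⟨b', hym⟩)
  have hm0 : m ≠ 0 := by
    rintro rfl
    simp at hm
  have hpm : p * m ≤ m := hm ▸ Nat.le_of_dvd (Nat.pos_of_ne_zero hm0) hcm
  nlinarith [Nat.pos_of_ne_zero hm0]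

theorem Prime.dvd_and_dvd_of_sq_add_mul_sq_eq_sq {R : Type*} [CommRing R] [IsDomain R]
    {p a b c : R} (hp : Prime p) (h : a ^ 2 + p * b ^ 2 = c ^ 2) (hc : p ∣ c) :
    p ∣ a ∧ p ∣ b := by
  have ha : p ∣ a := hp.dvd_of_dvd_pow (n := 2) <| by
    rw [show a ^ 2 = c ^ 2 - p * b ^ 2 by linear_combination h]
    exact dvd_sub (dvd_pow hc two_ne_zero) (dvd_mul_right _ _)
  refine ⟨ha, hp.dvd_of_dvd_pow (n := 2) ((mul_dvd_mul_iff_left hp.ne_zero).1 ?_)⟩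
  rw [show p * b ^ 2 = c ^ 2 - a ^ 2 by linear_combination h, ← sq]
  exact dvd_sub (pow_dvd_pow_of_dvd hc 2) (pow_dvd_pow_of_dvd ha 2)

theorem isSquare_neg_of_sq_add_mul_sq_eq_zero {F : Type*} [Field F] {q a b : F}
    (h : a ^ 2 + q * b ^ 2 = 0) (hab : ¬ (a = 0 ∧ b = 0)) : IsSquare (-q) := by
  have hb : b ≠ 0 := by
    rintro rfl
    exact hab ⟨by simpa using h, rfl⟩
  exact ⟨a / b, by field_simp; linear_combination -h⟩

theorem odd_prime_factor_of_denominator_is_appropriate_general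
    (q : ℕ)
    (x y : ℚ)
    (hxy : x ^ 2 + (q : ℚ) * y ^ 2 = 1)
    (p : ℕ) (hp : p.Prime)
    (hdvd : p ∣ Nat.lcm x.den y.den) :
    p ≠ q ∧ IsSquare (-(q : ZMod p)) := by
  set c := Nat.lcm x.den y.den
  obtain ⟨a, ha⟩ := Rat.den_dvd_iff_exists_mul_eq_intCast.1 (Nat.dvd_lcm_left x.den y.den)
  obtain ⟨b, hb⟩ := Rat.den_dvd_iff_exists_mul_eq_intCast.1 (Nat.dvd_lcm_right x.den y.den)
  have key : a ^ 2 + q * b ^ 2 = (c : ℤ) ^ 2 := by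
    have : (a : ℚ) ^ 2 + q * b ^ 2 = (c : ℚ) ^ 2 := by
      rw [← ha, ← hb]; linear_combination (c : ℚ) ^ 2 * hxy
    exact_mod_cast this
  have hab := Rat.not_dvd_and_dvd_of_mul_lcm_den_eq ha hb hp.one_lt hdvd
  have hpc : (p : ℤ) ∣ c := Int.natCast_dvd_natCast.2 hdvd
  refine ⟨?_, ?_⟩
  · rintro rfl
    exact hab (Prime.dvd_and_dvd_of_sq_add_mul_sq_eq_sq (Nat.prime_iff_prime_int.1 hp) key hpc)
  · have : Fact p.Prime := ⟨hp⟩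
    have key_mod : ((a : ZMod p)) ^ 2 + q * (b : ZMod p) ^ 2 = 0 := by
      have := congrArg (Int.cast : ℤ → ZMod p) key
      push_cast at this
      rwa [(ZMod.natCast_eq_zero_iff c p).2 hdvd, zero_pow two_ne_zero] at this
    refine isSquare_neg_of_sq_add_mul_sq_eq_zero key_mod ?_
    simpa only [ZMod.intCast_zmod_eq_zero_iff_dvd] using hab

/-- If `q` is an odd prime and `x, y` are positive rationals with `x² + q·y² = 1`, then every
odd prime factor `p` of the least common denominator of `x` and `y` is `q`-appropriate:
`p ≠ q` and `−q` is a quadratic residue modulo `p`. -/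
theorem odd_prime_factor_of_denominator_is_appropriate
    (q : ℕ) (hq : q.Prime) (hqodd : Odd q)
    (x y : ℚ) (hx : 0 < x) (hy : 0 < y)
    (hxy : x ^ 2 + (q : ℚ) * y ^ 2 = 1)
    (p : ℕ) (hp : p.Prime) (hpodd : Odd p)
    (hdvd : p ∣ Nat.lcm x.den y.den) :
    p ≠ q ∧ IsSquare (-(q : ZMod p)) :=
  odd_prime_factor_of_denominator_is_appropriate_general q x y hxy p hp hdvd
end

section
/- Let q be an odd prime and p a q-appropriate prime (i.e., p is odd, p ≠ q, and −q is a square mod p). Then there exist integers a, b and k ≥ 1 with gcd(a, b, p) = 1 such that a² + q·b² = p^(2k); consequently the equation X² + qY² = 1 has a solution (x,y) in the ring ℤ[1/p] with y ≠ 0. -/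
/-!
A square root `u₀` of `-q` mod `p` singles out the prime `𝔭 = (p, √-q + u₀)` of `ℤ[√-q]`.
Hensel lifting `u₀` and Thue's lemma give, for every `n`, an element `a + b√-q` in `𝔭` but not in
`𝔭̄`, of norm `m p^e` with `e ≥ n` and `p ∤ m ≤ q + 1`. Only finitely many triples
`(m, a mod m, b mod m)` occur, so two such elements `a + b√-q`, `c + d√-q` with `e < f` agree
mod `m`; then `(a + b√-q)(c - d√-q)` is divisible by `m p^e` and the quotient `α + β√-q` has norm
`p^(f-e)` and `β ≠ 0`. After removing common factors `p` from `α, β`, the square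
`α² - qβ² + 2αβ√-q` is a primitive element of norm `p^(2k)`; dividing by `p^k` gives the point.
-/

theorem exists_sq_add_dvd_of_isSquare_neg {p : ℕ} {q : ℤ} (h : IsSquare (-(q : ZMod p))) :
    ∃ u : ℤ, (p : ℤ) ∣ u ^ 2 + q := by
  obtain ⟨r, hr⟩ := h
  obtain ⟨u, rfl⟩ := ZMod.intCast_surjective r
  refine ⟨u, (ZMod.intCast_zmod_eq_zero_iff_dvd _ p).mp ?_⟩
  push_cast
  linear_combination -hr

theorem exists_sq_add_dvd_pow_succ {p q u₀ : ℤ} (hp : Prime p) (hu₀ : ¬p ∣ 2 * u₀)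
    (hu₀q : p ∣ u₀ ^ 2 + q) (n : ℕ) : ∃ u, p ∣ u - u₀ ∧ p ^ (n + 1) ∣ u ^ 2 + q := by
  induction n with
  | zero => exact ⟨u₀, by simp, by simpa using hu₀q⟩
  | succ n ih =>
    obtain ⟨u, hu, w, hw⟩ := ih
    have h2u : IsCoprime p (2 * u) := by
      rw [hp.coprime_iff_not_dvd]
      intro h
      have h' := dvd_sub h (hu.mul_left 2)
      rw [show 2 * u - 2 * (u - u₀) = 2 * u₀ by ring] at h'
      exact hu₀ h'
    obtain ⟨x, y, hxy⟩ := h2u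
    -- Newton step `u ↦ u - (u ^ 2 + q) / (2 * u)`, with `y` standing for `(2 * u)⁻¹` mod `p`
    refine ⟨u - w * y * p ^ (n + 1), ?_, w * x + w ^ 2 * y ^ 2 * p ^ n, ?_⟩
    · have h : u - w * y * p ^ (n + 1) - u₀ = u - u₀ - p * (w * y * p ^ n) := by ring
      exact h ▸ dvd_sub hu (dvd_mul_right _ _)
    · linear_combination hw - p ^ (n + 1) * w * hxy

theorem exists_sq_le_dvd_sub_mul {N : ℤ} (hN : 0 < N) (u : ℤ) :
    ∃ a b : ℤ, (a, b) ≠ 0 ∧ N ∣ a - u * b ∧ a ^ 2 ≤ N ∧ b ^ 2 ≤ N := by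
  lift N to ℕ using hN.le
  have : NeZero N := ⟨by omega⟩
  set M := N.sqrt
  have hcard : Fintype.card (ZMod N) < Fintype.card (Fin (M + 1) × Fin (M + 1)) := by
    simpa [ZMod.card, Fintype.card_prod, Fintype.card_fin] using Nat.lt_succ_sqrt N
  obtain ⟨x, y, hxy, hf⟩ := Fintype.exists_ne_map_eq_of_card_lt
    (fun ij : Fin (M + 1) × Fin (M + 1) => ((ij.1 : ℕ) - u * (ij.2 : ℕ) : ZMod N)) hcard
  have hsq : ∀ i j : Fin (M + 1), ((i : ℤ) - j) ^ 2 ≤ N := by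
    intro i j
    have hi := i.is_lt
    have hj := j.is_lt
    have hM : (M : ℤ) ^ 2 ≤ N := by exact_mod_cast Nat.sqrt_le' N
    nlinarith
  refine ⟨x.1 - y.1, x.2 - y.2, ?_, ?_, hsq _ _, hsq _ _⟩
  · intro h
    simp only [Prod.mk_eq_zero, sub_eq_zero, Nat.cast_inj, Fin.val_inj] at h
    exact hxy (Prod.ext h.1 h.2)
  · rw [← ZMod.intCast_zmod_eq_zero_iff_dvd]
    push_cast
    linear_combination hf

theorem exists_pow_mul_of_dvd_sub_mul {p a b u : ℤ} {k : ℕ} (hp : Prime p) (hp0 : 0 < p)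
    (hb : b ≠ 0) (hbk : b ^ 2 ≤ p ^ k) (h : p ^ k ∣ a - u * b) :
    ∃ (s : ℕ) (a' b' : ℤ), a = p ^ s * a' ∧ b = p ^ s * b' ∧ ¬p ∣ b' ∧ 2 * s ≤ k ∧
      p ^ (k - s) ∣ a' - u * b' := by
  have hp1 : 1 < p := by have := hp.ne_one; omega
  obtain ⟨s, b', hb', rfl⟩ := WfDvdMonoid.max_power_factor hb hp.irreducible
  have hb'0 : b' ≠ 0 := by rintro rfl; exact hb' (dvd_zero p)
  have hsk : 2 * s ≤ k := by
    have : 0 < b' ^ 2 := by positivity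
    refine (pow_le_pow_iff_right₀ hp1).mp ?_
    calc p ^ (2 * s) ≤ (p ^ s * b') ^ 2 := by
          rw [mul_pow, ← pow_mul, mul_comm s]
          nlinarith [pow_pos hp0 (2 * s)]
      _ ≤ p ^ k := hbk
  obtain ⟨a', rfl⟩ : p ^ s ∣ a := by
    have h' := dvd_add ((pow_dvd_pow p (by omega : s ≤ k)).trans h)
      (dvd_mul_right (p ^ s) (u * b'))
    rwa [sub_add, show u * (p ^ s * b') - p ^ s * (u * b') = 0 by ring, sub_zero] at h'
  refine ⟨s, a', b', rfl, rfl, hb', hsk, ?_⟩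
  rw [← mul_dvd_mul_iff_left (pow_ne_zero s hp.ne_zero), ← pow_add,
    Nat.add_sub_cancel' (by omega)]
  rwa [show p ^ s * (a' - u * b') = p ^ s * a' - u * (p ^ s * b') by ring]

/-- `a + b √-q` has norm `m * p ^ e` with `p ∤ m`, and lies in the prime `(p, √-q + u₀)` of
`ℤ[√-q]` but, as `p ∤ b`, not in its conjugate `(p, √-q - u₀)`. -/
structure IsRep (p q u₀ m : ℤ) (e : ℕ) (a b : ℤ) : Prop where
  sq_add_mul_sq : a ^ 2 + q * b ^ 2 = m * p ^ e
  not_dvd_cofactor : ¬p ∣ m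
  not_dvd_right : ¬p ∣ b
  dvd_sub_mul : p ∣ a - u₀ * b

theorem exists_isRep_of_dvd_sub_mul {p q u u₀ a b : ℤ} {j : ℕ} (hp : Prime p) (hq : 0 < q)
    (hj : 0 < j) (hb : ¬p ∣ b) (hu : p ∣ u - u₀) (huq : p ^ j ∣ u ^ 2 + q)
    (hab : p ^ j ∣ a - u * b) : ∃ m e, j ≤ e ∧ IsRep p q u₀ m e a b := by
  have hb0 : b ≠ 0 := by rintro rfl; exact hb (dvd_zero p)
  have hnorm : a ^ 2 + q * b ^ 2 ≠ 0 := by positivity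
  obtain ⟨e, m, hm, he⟩ := WfDvdMonoid.max_power_factor hnorm hp.irreducible
  have hjm : p ^ j ∣ p ^ e * m := by
    rw [← he, show a ^ 2 + q * b ^ 2 = (a - u * b) * (a + u * b) + b ^ 2 * (u ^ 2 + q) by ring]
    exact dvd_add (hab.mul_right _) (huq.mul_left _)
  have hje : j ≤ e := (pow_dvd_pow_iff hp.ne_zero hp.not_isUnit).mp
    (((hp.coprime_iff_not_dvd.mpr hm).pow_left).dvd_of_dvd_mul_right hjm)
  refine ⟨m, e, hje, he.trans (mul_comm _ _), hm, hb, ?_⟩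
  rw [show a - u₀ * b = a - u * b + (u - u₀) * b by ring]
  exact dvd_add ((dvd_pow_self p hj.ne').trans hab) (hu.mul_right b)

theorem exists_isRep {p q u₀ : ℤ} (hp : Prime p) (hp0 : 0 < p) (hq : 0 < q)
    (hu₀ : ¬p ∣ 2 * u₀) (hu₀q : p ∣ u₀ ^ 2 + q) (n : ℕ) :
    ∃ e ≥ n, ∃ m a b, 0 < m ∧ m ≤ q + 1 ∧ IsRep p q u₀ m e a b := by
  have hp1 : 1 < p := by have := hp.ne_one; omega
  set k := 2 * n + 2
  obtain ⟨u, hu, huq⟩ := exists_sq_add_dvd_pow_succ hp hu₀ hu₀q (2 * n + 1)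
  have hk : 1 < p ^ k := one_lt_pow₀ hp1 (by omega)
  obtain ⟨a, b, hab, habu, ha, hb⟩ := exists_sq_le_dvd_sub_mul (zero_lt_one.trans hk) u
  have hb0 : b ≠ 0 := by
    rintro rfl
    have ha0 : a ≠ 0 := by simpa using hab
    have hka : p ^ k ≤ |a| :=
      Int.le_of_dvd (abs_pos.mpr ha0) ((dvd_abs _ _).mpr (by simpa using habu))
    nlinarith [sq_abs a]
  obtain ⟨s, a, b, rfl, rfl, hb, hsk, hab⟩ :=
    exists_pow_mul_of_dvd_sub_mul hp hp0 hb0 hb habu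
  obtain ⟨m, e, hke, hrep⟩ := exists_isRep_of_dvd_sub_mul hp hq (j := k - s) (by omega) hb hu
    ((pow_dvd_pow p (by omega)).trans huq) hab
  have hm : 0 < m := by
    have hb0 := right_ne_zero_of_mul hb0
    have : 0 < a ^ 2 + q * b ^ 2 := by positivity
    exact pos_of_mul_pos_left (hrep.sq_add_mul_sq ▸ this) (pow_pos hp0 e).le
  refine ⟨e, by omega, m, a, b, hm, ?_, hrep⟩
  refine le_of_mul_le_mul_left ?_ (pow_pos hp0 (2 * s + e))
  calc p ^ (2 * s + e) * m = (p ^ s * a) ^ 2 + q * (p ^ s * b) ^ 2 := by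
        linear_combination (-(p ^ s) ^ 2) * hrep.sq_add_mul_sq
    _ ≤ (q + 1) * p ^ k := by nlinarith
    _ ≤ (q + 1) * p ^ (2 * s + e) := by gcongr; omega
    _ = p ^ (2 * s + e) * (q + 1) := mul_comm _ _

theorem IsRep.exists_sq_add_mul_sq_eq_pow {p q u₀ m a b c d : ℤ} {e f : ℕ} (hp : Prime p)
    (hu₀ : ¬p ∣ 2 * u₀) (h₁ : IsRep p q u₀ m e a b) (h₂ : IsRep p q u₀ m f c d) (hef : e < f)
    (hac : a ≡ c [ZMOD m]) (hbd : b ≡ d [ZMOD m]) :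
    ∃ α β, β ≠ 0 ∧ α ^ 2 + q * β ^ 2 = p ^ (f - e) := by
  have hm0 : m ≠ 0 := by rintro rfl; exact h₁.not_dvd_cofactor (dvd_zero p)
  have hpf : p ^ f = p ^ e * p ^ (f - e) := by rw [← pow_add, Nat.add_sub_cancel' hef.le]
  -- `X + Y √-q = (a + b √-q) (c - d √-q)`
  set X := a * c + q * b * d
  set Y := a * d - b * c
  have hXY : X ^ 2 + q * Y ^ 2 = m ^ 2 * p ^ (e + f) := by
    linear_combination (c ^ 2 + q * d ^ 2) * h₁.sq_add_mul_sq + m * p ^ e * h₂.sq_add_mul_sq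
  have hmX : m ∣ X := by
    rw [show X = a * (c - a) + q * b * (d - b) + (a ^ 2 + q * b ^ 2) by ring, h₁.sq_add_mul_sq]
    exact dvd_add (dvd_add (hac.dvd.mul_left _) (hbd.dvd.mul_left _)) (dvd_mul_right _ _)
  have hmY : m ∣ Y := by
    rw [show Y = a * (d - b) - b * (c - a) by ring]
    exact dvd_sub (hbd.dvd.mul_left _) (hac.dvd.mul_left _)
  -- `a / b` and `c / d` are the same square root of `-q` mod `p`, so `a d + b c ≢ 0` while
  -- `(a d - b c) (a d + b c) ≡ 0 mod p ^ e`
  have hpY : p ^ e ∣ Y := by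
    have hsum : ¬p ∣ a * d + b * c := by
      intro h
      have h' := dvd_sub (dvd_sub h (h₁.dvd_sub_mul.mul_left d)) (h₂.dvd_sub_mul.mul_left b)
      rw [show a * d + b * c - d * (a - u₀ * b) - b * (c - u₀ * d) = 2 * u₀ * (b * d) by ring]
        at h'
      rcases hp.dvd_or_dvd h' with h | h
      · exact hu₀ h
      · exact (hp.dvd_or_dvd h).elim h₁.not_dvd_right h₂.not_dvd_right
    have hprod : p ^ e ∣ Y * (a * d + b * c) := by
      rw [show Y * (a * d + b * c) = d ^ 2 * (a ^ 2 + q * b ^ 2) - b ^ 2 * (c ^ 2 + q * d ^ 2)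
        by ring, h₁.sq_add_mul_sq, h₂.sq_add_mul_sq, hpf]
      exact dvd_sub ⟨d ^ 2 * m, by ring⟩ ⟨b ^ 2 * m * p ^ (f - e), by ring⟩
    exact (hp.coprime_iff_not_dvd.mpr hsum).pow_left.dvd_of_dvd_mul_right hprod
  have hpX : p ^ e ∣ X := by
    rw [← Int.pow_dvd_pow_iff two_ne_zero, show X ^ 2 = m ^ 2 * p ^ (e + f) - q * Y ^ 2 by
      linear_combination hXY]
    refine dvd_sub (Dvd.dvd.mul_left ?_ _) ((pow_dvd_pow_of_dvd hpY 2).mul_left _)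
    rw [← pow_mul]
    exact pow_dvd_pow p (by omega)
  have hco : IsCoprime m (p ^ e) :=
    (hp.coprime_iff_not_dvd.mpr h₁.not_dvd_cofactor).symm.pow_right
  obtain ⟨α, hα⟩ := hco.mul_dvd hmX hpX
  obtain ⟨β, hβ⟩ := hco.mul_dvd hmY hpY
  refine ⟨α, β, ?_, ?_⟩
  · rintro rfl
    have hd : m * p ^ e * d ^ 2 = m * p ^ e * (b ^ 2 * p ^ (f - e)) := by
      linear_combination -d ^ 2 * h₁.sq_add_mul_sq + b ^ 2 * h₂.sq_add_mul_sq
        + (a * d + b * c) * hβ + m * b ^ 2 * hpf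
    have hd := mul_left_cancel₀ (mul_ne_zero hm0 (pow_ne_zero e hp.ne_zero)) hd
    exact h₂.not_dvd_right (hp.dvd_of_dvd_pow (hd ▸ (dvd_pow_self p (by omega)).mul_left _))
  · apply mul_left_cancel₀ (pow_ne_zero 2 (mul_ne_zero hm0 (pow_ne_zero e hp.ne_zero)))
    rw [pow_add, hpf] at hXY
    linear_combination hXY - (X + m * p ^ e * α) * hα - q * (Y + m * p ^ e * β) * hβ

theorem exists_sq_add_mul_sq_eq_pow_of_forall_exists_isRep {p q u₀ : ℤ} (hp : Prime p)
    (hu₀ : ¬p ∣ 2 * u₀)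
    (h : ∀ n : ℕ, ∃ e ≥ n, ∃ m a b, 0 < m ∧ m ≤ q + 1 ∧ IsRep p q u₀ m e a b) :
    ∃ G : ℕ, ∃ α β : ℤ, β ≠ 0 ∧ α ^ 2 + q * β ^ 2 = p ^ G := by
  set E := {e : ℕ | ∃ m a b, 0 < m ∧ m ≤ q + 1 ∧ IsRep p q u₀ m e a b}
  have hE : E.Infinite := Set.infinite_of_not_bddAbove fun ⟨B, hB⟩ => by
    obtain ⟨e, he, he'⟩ := h (B + 1)
    have := hB he'
    omega
  choose! m a b hm hmq hrep using fun e (he : e ∈ E) => he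
  have hmaps : Set.MapsTo (fun e => (m e, a e % m e, b e % m e)) E
      (Set.Icc 1 (q + 1) ×ˢ Set.Icc 0 q ×ˢ Set.Icc 0 q) := by
    intro e he
    have := hm e he
    have := hmq e he
    have := Int.emod_nonneg (a e) (hm e he).ne'
    have := Int.emod_lt_of_pos (a e) (hm e he)
    have := Int.emod_nonneg (b e) (hm e he).ne'
    have := Int.emod_lt_of_pos (b e) (hm e he)
    simp only [Set.mem_prod, Set.mem_Icc]
    omega
  obtain ⟨e, he, f, hf, hef, heq⟩ := hE.exists_lt_map_eq_of_mapsTo hmaps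
    ((Set.finite_Icc _ _).prod ((Set.finite_Icc _ _).prod (Set.finite_Icc _ _)))
  obtain ⟨hmf, ha, hb⟩ := Prod.ext_iff.mp heq |>.imp_right Prod.ext_iff.mp
  simp only at hmf ha hb
  rw [← hmf] at ha hb
  exact ⟨f - e, (hrep e he).exists_sq_add_mul_sq_eq_pow hp hu₀ (hmf ▸ hrep f hf) hef ha hb⟩

theorem exists_primitive_sq_add_mul_sq_eq_pow {p q α β : ℤ} {G : ℕ} (hp : Prime p)
    (hq : 1 < q) (hβ : β ≠ 0) (h : α ^ 2 + q * β ^ 2 = p ^ G) :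
    ∃ α β : ℤ, ∃ E : ℕ, 0 < E ∧ ¬(p ∣ α ∧ p ∣ β) ∧ α ^ 2 + q * β ^ 2 = p ^ E := by
  induction G using Nat.strong_induction_on generalizing α β with
  | _ G ih =>
  by_cases hpαβ : p ∣ α ∧ p ∣ β
  · obtain ⟨⟨α, rfl⟩, ⟨β, rfl⟩⟩ := hpαβ
    have hG : 2 ≤ G := (pow_dvd_pow_iff hp.ne_zero hp.not_isUnit).mp
      ⟨α ^ 2 + q * β ^ 2, by rw [← h]; ring⟩
    refine ih (G - 2) (by omega) (α := α) (right_ne_zero_of_mul hβ)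
      (mul_left_cancel₀ (pow_ne_zero 2 hp.ne_zero) ?_)
    rw [← pow_add, Nat.add_sub_cancel' hG, ← h]
    ring
  · refine ⟨α, β, G, Nat.pos_of_ne_zero ?_, hpαβ, h⟩
    rintro rfl
    have : 0 < β ^ 2 := by positivity
    nlinarith [sq_nonneg α]

theorem not_dvd_sq_sub_mul_sq_and_two_mul {p q α β : ℤ} (hp : Prime p) (hp2 : ¬p ∣ 2)
    (hpq : ¬p ∣ q) (h : ¬(p ∣ α ∧ p ∣ β)) : ¬(p ∣ α ^ 2 - q * β ^ 2 ∧ p ∣ 2 * α * β) := by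
  rintro ⟨hA, hB⟩
  rcases hp.dvd_or_dvd hB with hB | hβ
  · rcases hp.dvd_or_dvd hB with h2 | hα
    · exact hp2 h2
    · have hqβ := dvd_sub (dvd_pow hα two_ne_zero) hA
      rw [sub_sub_cancel] at hqβ
      exact (hp.dvd_or_dvd hqβ).elim hpq fun hβ => h ⟨hα, hp.dvd_of_dvd_pow hβ⟩
  · have hα := dvd_add hA ((dvd_pow hβ two_ne_zero).mul_left q)
    rw [sub_add_cancel] at hα
    exact h ⟨hp.dvd_of_dvd_pow hα, hβ⟩

theorem gcd_gcd_natAbs_eq_one {p : ℕ} (hp : p.Prime) {a b : ℤ}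
    (h : ¬((p : ℤ) ∣ a ∧ (p : ℤ) ∣ b)) : Nat.gcd (Nat.gcd a.natAbs b.natAbs) p = 1 := by
  refine Nat.Coprime.gcd_eq_one (Nat.coprime_comm.mp ((hp.coprime_iff_not_dvd).mpr ?_))
  rwa [Nat.dvd_gcd_iff, ← Int.ofNat_dvd_left, ← Int.ofNat_dvd_left]

theorem ne_zero_of_sq_add_mul_sq_eq_pow {p q a b : ℤ} {k : ℕ} (hp : Prime p) (hk : 0 < k)
    (hprim : ¬(p ∣ a ∧ p ∣ b)) (h : a ^ 2 + q * b ^ 2 = p ^ k) : b ≠ 0 := by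
  rintro rfl
  refine hprim ⟨hp.dvd_of_dvd_pow (n := 2) ?_, dvd_zero p⟩
  rw [show a ^ 2 = p ^ k by simpa using h]
  exact dvd_pow_self p hk.ne'

theorem exists_rat_sq_add_mul_sq_eq_one {p q a b : ℤ} {k : ℕ} (hp : p ≠ 0) (hb : b ≠ 0)
    (h : a ^ 2 + q * b ^ 2 = p ^ (2 * k)) :
    ∃ x y : ℚ, (∃ (m : ℤ) (j : ℕ), x = m / (p : ℚ) ^ j) ∧
      (∃ (m : ℤ) (j : ℕ), y = m / (p : ℚ) ^ j) ∧ x ^ 2 + q * y ^ 2 = 1 ∧ y ≠ 0 := by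
  have hpk : (p : ℚ) ^ k ≠ 0 := by simp [hp]
  refine ⟨a / p ^ k, b / p ^ k, ⟨a, k, rfl⟩, ⟨b, k, rfl⟩, ?_, by simp [hb, hp]⟩
  field_simp
  rw [← pow_mul']
  exact_mod_cast h

theorem appropriate_prime_gives_solution_general
    (q p : ℕ) (hq : q.Prime)
    (hp : p.Prime) (hpodd : Odd p) (hpq : p ≠ q)
    (hres : IsSquare (-(q : ZMod p))) :
    (∃ (a b : ℤ) (k : ℕ), 1 ≤ k ∧ Nat.gcd (Nat.gcd a.natAbs b.natAbs) p = 1 ∧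
        a ^ 2 + (q : ℤ) * b ^ 2 = (p : ℤ) ^ (2 * k)) ∧
    (∃ x y : ℚ, (∃ (m : ℤ) (j : ℕ), x = (m : ℚ) / (p : ℚ) ^ j) ∧
        (∃ (m : ℤ) (j : ℕ), y = (m : ℚ) / (p : ℚ) ^ j) ∧
        x ^ 2 + (q : ℚ) * y ^ 2 = 1 ∧ y ≠ 0) := by
  have hpZ : Prime (p : ℤ) := Nat.prime_iff_prime_int.mp hp
  have hp2 : ¬(p : ℤ) ∣ 2 := fun h => by
    obtain ⟨r, rfl⟩ := hpodd
    have := Nat.le_of_dvd two_pos (by exact_mod_cast h)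
    have := hp.two_le
    omega
  have hpq' : ¬(p : ℤ) ∣ q := by exact_mod_cast mt (Nat.prime_dvd_prime_iff_eq hp hq).mp hpq
  obtain ⟨u₀, hu₀q⟩ := exists_sq_add_dvd_of_isSquare_neg (q := q) (by simpa using hres)
  have hu₀ : ¬(p : ℤ) ∣ 2 * u₀ := fun h => (hpZ.dvd_or_dvd h).elim hp2 fun hu =>
    hpq' (by simpa using dvd_sub hu₀q (dvd_pow hu two_ne_zero))
  obtain ⟨G, α, β, hβ, hG⟩ := exists_sq_add_mul_sq_eq_pow_of_forall_exists_isRep hpZ hu₀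
    (exists_isRep hpZ (by exact_mod_cast hp.pos) (by exact_mod_cast hq.pos) hu₀ hu₀q)
  obtain ⟨α, β, k, hk, hprim, hαβ⟩ :=
    exists_primitive_sq_add_mul_sq_eq_pow hpZ (by exact_mod_cast hq.one_lt) hβ hG
  have hprim' := not_dvd_sq_sub_mul_sq_and_two_mul hpZ hp2 hpq' hprim
  have hab : (α ^ 2 - q * β ^ 2) ^ 2 + q * (2 * α * β) ^ 2 = p ^ (2 * k) := by
    rw [pow_mul', ← hαβ]; ring
  have hb := ne_zero_of_sq_add_mul_sq_eq_pow hpZ (by omega) hprim' hab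
  refine ⟨⟨_, _, k, hk, gcd_gcd_natAbs_eq_one hp hprim', hab⟩, ?_⟩
  simpa using exists_rat_sq_add_mul_sq_eq_one (by exact_mod_cast hp.ne_zero) hb hab

/-- If `q` is an odd prime and `p` is a `q`-appropriate prime (odd, `p ≠ q`, and `−q` a square
mod `p`), then there is a primitive solution `a² + q·b² = p^(2k)` with `k ≥ 1` and
`gcd(a, b, p) = 1`; consequently `X² + qY² = 1` has a solution in `ℤ[1/p]` with `Y ≠ 0`. -/
theorem appropriate_prime_gives_solution
    (q p : ℕ) (hq : q.Prime) (hqodd : Odd q)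
    (hp : p.Prime) (hpodd : Odd p) (hpq : p ≠ q)
    (hres : IsSquare (-(q : ZMod p))) :
    (∃ (a b : ℤ) (k : ℕ), 1 ≤ k ∧ Nat.gcd (Nat.gcd a.natAbs b.natAbs) p = 1 ∧
        a ^ 2 + (q : ℤ) * b ^ 2 = (p : ℤ) ^ (2 * k)) ∧
    (∃ x y : ℚ, (∃ (m : ℤ) (j : ℕ), x = (m : ℚ) / (p : ℚ) ^ j) ∧
        (∃ (m : ℤ) (j : ℕ), y = (m : ℚ) / (p : ℚ) ^ j) ∧
        x ^ 2 + (q : ℚ) * y ^ 2 = 1 ∧ y ≠ 0) :=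
  appropriate_prime_gives_solution_general q p hq hp hpodd hpq hres
end

section
/- Let 3 = q₀ < q₁ < q₂ < ⋯ enumerate the odd primes. For every natural number e and every finite set I ⊆ ℕ with e ∉ I, there exist infinitely many primes p that are q_e-appropriate but, for every i ∈ I, are not q_i-appropriate. -/
/-- A prime `p` is `q`-appropriate (for an odd prime `q`) if `p` is odd, `p ≠ q`, and
`−q` is a quadratic residue modulo `p`. -/
def QAppropriate (q p : ℕ) : Prop :=
  p.Prime ∧ Odd p ∧ p ≠ q ∧ IsSquare (-(q : ZMod p))

/-- The increasing enumeration `3 = q₀ < q₁ < ⋯` of the odd primes. -/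
noncomputable def oddPrime (e : ℕ) : ℕ := Nat.nth (fun n => n.Prime ∧ Odd n) e

/-!
For a prime `p ≡ 1 (mod 4)`, `-1` is a square mod `p`, so by quadratic reciprocity `p` is
`q`-appropriate exactly when `p` is a square mod `q`. By the Chinese remainder theorem and
Dirichlet's theorem there are infinitely many primes `p ≡ 1 (mod 4)` that are squares modulo
`q_e` and non-squares modulo every `q_i`, `i ∈ I`.
-/

lemma isSquare_neg_iff_of_isSquare_neg_one {R : Type*} [CommRing R] {x : R}
    (h : IsSquare (-1 : R)) : IsSquare (-x) ↔ IsSquare x :=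
  ⟨fun hx => by simpa using h.mul hx, fun hx => by simpa using h.mul hx⟩

lemma ZMod.isSquare_neg_prime_iff_of_mod_four_eq_one {p q : ℕ} [Fact p.Prime] [Fact q.Prime]
    (hp : p % 4 = 1) (hq : q ≠ 2) : IsSquare (-(q : ZMod p)) ↔ IsSquare (p : ZMod q) := by
  rw [isSquare_neg_iff_of_isSquare_neg_one (ZMod.exists_sq_eq_neg_one_iff.2 (by omega)),
    ZMod.exists_sq_eq_prime_iff_of_mod_four_eq_one hp hq]

lemma ZMod.exists_natCast_not_isSquare {q : ℕ} (hq : q.Prime) (hq2 : q ≠ 2) :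
    ∃ c : ℕ, ¬IsSquare (c : ZMod q) := by
  have := Fact.mk hq
  obtain ⟨x, hx⟩ := FiniteField.exists_nonsquare (F := ZMod q) (by rwa [ZMod.ringChar_zmod_n])
  exact ⟨x.val, by rwa [ZMod.natCast_zmod_val]⟩

lemma Nat.coprime_of_not_isSquare_natCast {q c : ℕ} (hq : q.Prime)
    (hc : ¬IsSquare (c : ZMod q)) : c.Coprime q :=
  (Nat.coprime_comm.1 <| (Nat.Prime.coprime_iff_not_dvd hq).2 fun hdvd =>
    hc <| (ZMod.natCast_eq_zero_iff c q).2 hdvd ▸ IsSquare.zero)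

lemma infinite_setOf_prime_and_forall_modEq {ι : Type*} (t : Finset ι) (m r : ι → ℕ)
    (hm0 : ∀ i ∈ t, m i ≠ 0) (hm : (t : Set ι).Pairwise fun i j => (m i).Coprime (m j))
    (hr : ∀ i ∈ t, (r i).Coprime (m i)) :
    {p : ℕ | p.Prime ∧ ∀ i ∈ t, p ≡ r i [MOD m i]}.Infinite := by
  obtain ⟨k, hk⟩ := Nat.chineseRemainderOfFinset r m t hm0 hm
  have hk_coprime : k.Coprime (∏ i ∈ t, m i) :=
    Nat.Coprime.prod_right fun i hi => (hk i hi).gcd_eq.trans (hr i hi)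
  refine (Nat.infinite_setOfPred_prime_and_modEq
    (Finset.prod_ne_zero_iff.2 hm0) hk_coprime).mono ?_
  rintro p ⟨hp, hpk⟩
  exact ⟨hp, fun i hi => (hpk.of_dvd (Finset.dvd_prod_of_mem m hi)).trans (hk i hi)⟩

lemma qAppropriate_iff_of_modEq {q p c : ℕ} (hq : q.Prime) (hq2 : q ≠ 2) (hp : p.Prime)
    (hp4 : p % 4 = 1) (hc : c.Coprime q) (hpc : p ≡ c [MOD q]) :
    QAppropriate q p ↔ IsSquare (c : ZMod q) := by
  have := Fact.mk hp
  have := Fact.mk hq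
  have hpq : p ≠ q := by
    rintro rfl
    exact hp.ne_one (hc.symm.eq_one_of_dvd ((hpc.dvd_iff dvd_rfl).1 dvd_rfl))
  rw [← (ZMod.natCast_eq_natCast_iff p c q).2 hpc,
    ← ZMod.isSquare_neg_prime_iff_of_mod_four_eq_one hp4 hq2]
  exact ⟨fun h => h.2.2.2, fun h => ⟨hp, Nat.odd_iff.2 (by omega), hpq, h⟩⟩

lemma infinite_setOf_prime_and_odd : {n : ℕ | n.Prime ∧ Odd n}.Infinite :=
  (Nat.infinite_setOfPred_prime.sdiff (Set.finite_singleton 2)).mono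
    fun _ hn => ⟨hn.1, hn.1.odd_of_ne_two hn.2⟩

lemma oddPrime_prime (i : ℕ) : (oddPrime i).Prime :=
  (Nat.nth_mem_of_infinite infinite_setOf_prime_and_odd i).1

lemma oddPrime_ne_two (i : ℕ) : oddPrime i ≠ 2 := fun h =>
  Nat.not_even_iff_odd.2 (Nat.nth_mem_of_infinite infinite_setOf_prime_and_odd i).2
    (by rw [← oddPrime, h]; exact even_two)

lemma oddPrime_coprime {i j : ℕ} (hij : i ≠ j) : (oddPrime i).Coprime (oddPrime j) :=
  (Nat.coprime_primes (oddPrime_prime i) (oddPrime_prime j)).2 fun h =>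
    hij (Nat.nth_injective infinite_setOf_prime_and_odd h)

lemma four_coprime_oddPrime (i : ℕ) : Nat.Coprime 4 (oddPrime i) :=
  Nat.Coprime.pow_left 2 <|
    (Nat.coprime_primes Nat.prime_two (oddPrime_prime i)).2 (oddPrime_ne_two i).symm

lemma infinite_setOf_prime_and_mod_four_eq_one_and_forall_modEq (S : Finset ℕ) (r : ℕ → ℕ)
    (hr : ∀ i ∈ S, (r i).Coprime (oddPrime i)) :
    {p : ℕ | p.Prime ∧ p % 4 = 1 ∧ ∀ i ∈ S, p ≡ r i [MOD oddPrime i]}.Infinite := by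
  -- the extra index `none` carries the modulus `4`
  refine (infinite_setOf_prime_and_forall_modEq S.insertNone (fun o => o.elim 4 oddPrime)
    (fun o => o.elim 1 r) ?_ ?_ ?_).mono ?_
  · exact Finset.forall_mem_insertNone.2 ⟨four_ne_zero, fun i _ => (oddPrime_prime i).ne_zero⟩
  · rintro (_ | i) - (_ | j) - hij
    · exact absurd rfl hij
    · exact four_coprime_oddPrime j
    · exact (four_coprime_oddPrime i).symm
    · exact oddPrime_coprime (Option.some_injective _ |>.ne_iff.1 hij)
  · exact Finset.forall_mem_insertNone.2 ⟨Nat.coprime_one_left 4, hr⟩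
  · rintro p ⟨hp, hpr⟩
    obtain ⟨hp4, hpS⟩ := Finset.forall_mem_insertNone.1 hpr
    exact ⟨hp, hp4, hpS⟩

/-- For every `e` and every finite `I ⊆ ℕ` with `e ∉ I`, there are infinitely many primes
that are `q_e`-appropriate but not `q_i`-appropriate for any `i ∈ I`. -/
theorem infinitely_many_selectively_appropriate_primes
    (e : ℕ) (I : Finset ℕ) (heI : e ∉ I) :
    {p : ℕ | QAppropriate (oddPrime e) p ∧ ∀ i ∈ I, ¬ QAppropriate (oddPrime i) p}.Infinite := by
  choose b hb using fun i =>
    ZMod.exists_natCast_not_isSquare (oddPrime_prime i) (oddPrime_ne_two i)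
  let r : ℕ → ℕ := fun i => if i = e then 1 else b i
  have hr : ∀ i, (r i).Coprime (oddPrime i) := fun i => by
    by_cases hi : i = e
    · simp [r, hi]
    · simpa [r, hi] using Nat.coprime_of_not_isSquare_natCast (oddPrime_prime i) (hb i)
  refine (infinite_setOf_prime_and_mod_four_eq_one_and_forall_modEq (insert e I) r
    fun i _ => hr i).mono ?_
  rintro p ⟨hp, hp4, hpr⟩
  have key : ∀ i ∈ insert e I, QAppropriate (oddPrime i) p ↔ IsSquare (r i : ZMod (oddPrime i)) :=
    fun i hi => qAppropriate_iff_of_modEq (oddPrime_prime i) (oddPrime_ne_two i) hp hp4 (hr i)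
      (hpr i hi)
  refine ⟨(key e (Finset.mem_insert_self e I)).2 (by simp [r]), fun i hi => ?_⟩
  rw [key i (Finset.mem_insert_of_mem hi)]
  simpa [r, show i ≠ e from fun h => heI (h ▸ hi)] using hb i
end

section
/- Let q be an odd prime, m = 4q, and n an integer with n ≡ 1 (mod 4) and n a nonzero square modulo q. Then n is coprime to m, and every prime p ≡ n (mod m) is q-appropriate. -/
/-! Reducing `p ≡ n (mod 4q)` modulo `4` and modulo `q` gives `p ≡ 1 (mod 4)` and `p ≡ n`, a
nonzero square, modulo `q`. The first makes `-1` a square modulo `p`; together with the second,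
quadratic reciprocity (in the form valid for `p ≡ 1 (mod 4)`) makes `q` a square modulo `p`.
Hence `-q = (-1) · q` is a square modulo `p`. -/

theorem Nat.coprime_four_of_mod_four_eq_one {n : ℕ} (hn : n % 4 = 1) : Nat.Coprime n 4 := by
  rw [Nat.coprime_comm, Nat.Coprime, Nat.gcd_rec, hn]
  rfl

theorem Nat.coprime_of_natCast_zmod_ne_zero {n q : ℕ} (hq : q.Prime) (hn : (n : ZMod q) ≠ 0) :
    Nat.Coprime n q :=
  Nat.coprime_comm.mp <|
    hq.coprime_iff_not_dvd.mpr fun h => hn <| (ZMod.natCast_eq_zero_iff n q).mpr h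

theorem ZMod.isSquare_neg_natCast_of_mod_four_eq_one {p q : ℕ} [Fact p.Prime] [Fact q.Prime]
    (hp : p % 4 = 1) (hq : q ≠ 2) (hpq : IsSquare (p : ZMod q)) : IsSquare (-(q : ZMod p)) := by
  have hneg_one : IsSquare (-1 : ZMod p) := ZMod.exists_sq_eq_neg_one_iff.mpr (by omega)
  have hq_sq : IsSquare (q : ZMod p) :=
    (ZMod.exists_sq_eq_prime_iff_of_mod_four_eq_one hp hq).mpr hpq
  simpa using hneg_one.mul hq_sq

/-- Let `q` be an odd prime, `m = 4q`, and `n` an integer with `n ≡ 1 (mod 4)` which is a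
nonzero square modulo `q`. Then `n` is coprime to `m`, and every prime `p ≡ n (mod m)` is
`q`-appropriate: `p` is odd, `p ≠ q`, and `−q` is a quadratic residue modulo `p`. -/
theorem primes_in_progression_are_appropriate
    (q : ℕ) (hq : q.Prime) (hqodd : Odd q) (n : ℕ)
    (hn4 : n % 4 = 1) (hnq : (n : ZMod q) ≠ 0 ∧ IsSquare ((n : ZMod q))) :
    Nat.Coprime n (4 * q) ∧
    ∀ p : ℕ, p.Prime → p % (4 * q) = n % (4 * q) →
      (Odd p ∧ p ≠ q ∧ IsSquare (-(q : ZMod p))) := by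
  have := Fact.mk hq
  obtain ⟨hn0, hn_sq⟩ := hnq
  refine ⟨(Nat.coprime_four_of_mod_four_eq_one hn4).mul_right
    (Nat.coprime_of_natCast_zmod_ne_zero hq hn0), fun p hp hpn => ?_⟩
  have := Fact.mk hp
  have hp4 : p % 4 = 1 := hn4 ▸ Nat.ModEq.of_mul_right q hpn
  have hpq : (p : ZMod q) = n :=
    (ZMod.natCast_eq_natCast_iff p n q).mpr (Nat.ModEq.of_mul_left 4 hpn)
  refine ⟨hp.odd_of_ne_two (by omega), fun h => hn0 ?_, ?_⟩
  · rw [← hpq, h, ZMod.natCast_self]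
  · exact ZMod.isSquare_neg_natCast_of_mod_four_eq_one hp4 (hqodd.ne_two_of_dvd_nat dvd_rfl)
      (hpq ▸ hn_sq)
end

section
/- The jump operator A ↦ A′ is not an enumeration operator: there is no Turing functional Γ such that for every set A ⊆ ℕ and every enumeration C of A (a set C with π₁(C) = A), Γ^C is total with values in {0,1} and computes an enumeration of A′. -/
/-- Codes for oracle Turing machines (partial functions recursive in an oracle). -/
inductive OCode : Type
  | zero : OCode
  | succ : OCode
  | left : OCode
  | right : OCode
  | oracle : OCode
  | pair : OCode → OCode → OCode
  | comp : OCode → OCode → OCode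
  | prec : OCode → OCode → OCode
  | rfind' : OCode → OCode

namespace OCode

/-- Evaluation of an oracle code with oracle `O : ℕ → ℕ`. -/
def eval (O : ℕ → ℕ) : OCode → ℕ →. ℕ
  | zero => pure 0
  | succ => fun n => Part.some (n + 1)
  | left => fun n => Part.some n.unpair.1
  | right => fun n => Part.some n.unpair.2
  | oracle => fun n => Part.some (O n)
  | pair cf cg => fun n => Nat.pair <$> eval O cf n <*> eval O cg n
  | comp cf cg => fun n => eval O cg n >>= eval O cf
  | prec cf cg =>
    Nat.unpaired fun a n =>
      n.rec (eval O cf a) fun y IH => do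
        let i ← IH
        eval O cg (Nat.pair a (Nat.pair y i))
  | rfind' cf =>
    Nat.unpaired fun a m =>
      (Nat.rfind fun n => (fun m => m = 0) <$> eval O cf (Nat.pair a (n + m))).map (· + m)

/-- A surjective numbering of oracle codes. -/
def ofNat : ℕ → OCode
  | 0 => zero
  | 1 => succ
  | 2 => left
  | 3 => right
  | 4 => oracle
  | n + 5 =>
    let m := n.div2.div2
    have hm : m < n + 5 := by
      simp only [m, Nat.div2_val]
      have : n / 2 / 2 ≤ n := le_trans (Nat.div_le_self _ _) (Nat.div_le_self _ _)
      omega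
    have _m1 : m.unpair.1 < n + 5 := lt_of_le_of_lt m.unpair_left_le hm
    have _m2 : m.unpair.2 < n + 5 := lt_of_le_of_lt m.unpair_right_le hm
    match n.bodd, n.div2.bodd with
    | false, false => pair (ofNat m.unpair.1) (ofNat m.unpair.2)
    | false, true => comp (ofNat m.unpair.1) (ofNat m.unpair.2)
    | true, false => prec (ofNat m.unpair.1) (ofNat m.unpair.2)
    | true, true => rfind' (ofNat m)
decreasing_by all_goals first | exact _m1 | exact _m2 | exact hm

end OCode

open Classical in
/-- The characteristic function of a set of naturals. -/
noncomputable def chi (A : Set ℕ) : ℕ → ℕ := fun n => if n ∈ A then 1 else 0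

/-- The Turing jump `A′` of a set `A ⊆ ℕ`. -/
noncomputable def jump (A : Set ℕ) : Set ℕ :=
  {e | ((OCode.ofNat e).eval (chi A) e).Dom}

/-- `A` is Turing reducible to `B`. -/
def TuringLE (A B : Set ℕ) : Prop :=
  ∃ c : OCode, ∀ n, c.eval (chi B) n = Part.some (chi A n)

/-- `A` is computably enumerable relative to `B`. -/
def CEIn (A B : Set ℕ) : Prop :=
  ∃ c : OCode, A = {n | (c.eval (chi B) n).Dom}

/-- The projection `π₁(B) = {x : ∃ y, ⟨x,y⟩ ∈ B}`; `B` is an enumeration of `π₁(B)`. -/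
def proj1 (C : Set ℕ) : Set ℕ := {x | ∃ y, Nat.pair x y ∈ C}

/-- `E : 2^ℕ → 2^ℕ` is an enumeration operator: some Turing functional `Γ`, given any
enumeration `C` of any set `A` as oracle, is total with values in `{0,1}` and computes
the characteristic function of an enumeration of `E(A)`. -/
def IsEnumOp (E : Set ℕ → Set ℕ) : Prop :=
  ∃ Γ : OCode, ∀ A C : Set ℕ, proj1 C = A →
    (∀ n, Γ.eval (chi C) n = Part.some 0 ∨ Γ.eval (chi C) n = Part.some 1) ∧
    proj1 {n | Γ.eval (chi C) n = Part.some 1} = E A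

/-!
Run `Γ` on a computable enumeration `C` of the halting set `K`. Then `Γ^C` is a computable
0/1-valued function, so the set it enumerates, `K′`, is the projection of a computable set and
hence r.e. But `x ∉ K` iff the index of the machine "halt once the oracle vanishes at `x`"
lies in `K′`, so the complement of `K` would be r.e. too.
-/

open Nat.Partrec (Code)

theorem primrec_affine (a b : ℕ) : Primrec fun n => a * n + b :=
  Primrec.nat_add.comp (Primrec.nat_mul.comp (Primrec.const a) Primrec.id) (Primrec.const b)

theorem chi_eq_zero_iff {A : Set ℕ} {x : ℕ} : chi A x = 0 ↔ x ∉ A := by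
  by_cases h : x ∈ A <;> simp [chi, h]

theorem computable_chi {A : Set ℕ} (hA : ComputablePred (· ∈ A)) : Computable (chi A) := by
  classical
  exact ComputablePred.ite (Computable.const 1) (Computable.const 0) hA

theorem REPred.comp {α β : Type*} [Primcodable α] [Primcodable β] {p : β → Prop}
    (hp : REPred p) {f : α → β} (hf : Computable f) : REPred fun a => p (f a) :=
  Partrec.comp hp hf

theorem rePred_mem_proj1 {S : Set ℕ} (hS : Computable (chi S)) : REPred (· ∈ proj1 S) := by
  have hsearch : Partrec fun x => Nat.rfind fun y => Part.some (chi S (Nat.pair x y) == 1) :=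
    Partrec.rfind (Primrec.beq.to_comp.comp (hS.comp Primrec₂.natPair.to_comp)
      (Computable.const 1)).partrec
  refine hsearch.dom_re.of_eq fun x => Nat.rfind_dom.trans ?_
  simp [proj1, chi]

namespace OCode

def encode : OCode → ℕ
  | zero => 0
  | succ => 1
  | left => 2
  | right => 3
  | oracle => 4
  | pair cf cg => 2 * (2 * Nat.pair (encode cf) (encode cg)) + 5
  | comp cf cg => 2 * (2 * Nat.pair (encode cf) (encode cg) + 1) + 5
  | prec cf cg => 2 * (2 * Nat.pair (encode cf) (encode cg)) + 1 + 5
  | rfind' cf => 2 * (2 * encode cf + 1) + 1 + 5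

theorem ofNat_encode (c : OCode) : ofNat (encode c) = c := by
  induction c <;> simp [encode, ofNat, Nat.div2_val, *]

def const : ℕ → OCode
  | 0 => zero
  | n + 1 => comp succ (const n)

@[simp] theorem eval_const (O : ℕ → ℕ) (n m : ℕ) : (const n).eval O m = Part.some n := by
  induction n with
  | zero => rfl
  | succ n ih => simp [const, eval, ih]

def waitZero (x : ℕ) : OCode := rfind' (comp oracle (const x))

theorem eval_waitZero_dom (O : ℕ → ℕ) (x n : ℕ) : ((waitZero x).eval O n).Dom ↔ O x = 0 := by
  simp only [waitZero, eval, Nat.unpaired, eval_const, Part.map_Dom]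
  exact Nat.rfind_dom.trans (by simp)

theorem primrec_encode_const : Primrec fun n => encode (const n) := by
  -- `e ↦ encode (comp succ c)` for `e = encode c`
  have hstep : Primrec fun e => 2 * (2 * Nat.pair 1 e + 1) + 5 :=
    ((primrec_affine 4 7).comp (Primrec₂.natPair.comp (Primrec.const 1) Primrec.id)).of_eq
      fun e => by simp only [id]; ring
  refine (Primrec.nat_rec₁ 0 (hstep.comp Primrec.snd).to₂).of_eq fun n => ?_
  induction n with
  | zero => rfl
  | succ n ih => exact congrArg (fun e => 2 * (2 * Nat.pair 1 e + 1) + 5) ih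

theorem computable_encode_waitZero : Computable fun x => encode (waitZero x) := by
  -- `encode (rfind' (comp oracle c))` as a function of `Nat.pair (encode oracle) (encode c)`
  have houter : Primrec fun e => 2 * (2 * (2 * (2 * e + 1) + 5) + 1) + 1 + 5 :=
    (primrec_affine 16 36).of_eq fun e => by ring
  exact ((houter.comp (Primrec₂.natPair.comp (Primrec.const 4) primrec_encode_const)).of_eq
    fun _ => rfl).to_comp

def toCode (cO : Code) : OCode → Code
  | zero => Code.zero
  | succ => Code.succ
  | left => Code.left
  | right => Code.right
  | oracle => cO
  | pair cf cg => Code.pair (toCode cO cf) (toCode cO cg)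
  | comp cf cg => Code.comp (toCode cO cf) (toCode cO cg)
  | prec cf cg => Code.prec (toCode cO cf) (toCode cO cg)
  | rfind' cf => Code.rfind' (toCode cO cf)

theorem eval_toCode {O : ℕ → ℕ} {cO : Code} (hO : cO.eval = fun n => Part.some (O n))
    (c : OCode) : (toCode cO c).eval = c.eval O := by
  induction c <;> simp only [toCode, eval, Code.eval, *] <;> rfl

theorem partrec_eval {O : ℕ → ℕ} (hO : Computable O) (c : OCode) : Partrec (c.eval O) := by
  obtain ⟨cO, hcO⟩ := Code.exists_code.1 (Partrec.nat_iff.1 hO)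
  rw [← eval_toCode hcO]
  exact Partrec.nat_iff.2 (Code.exists_code.2 ⟨_, rfl⟩)

end OCode

theorem computable_chi_setOf_eval_eq_one {O : ℕ → ℕ} (hO : Computable O) {Γ : OCode}
    (hΓ : ∀ n, Γ.eval O n = Part.some 0 ∨ Γ.eval O n = Part.some 1) :
    Computable (chi {n | Γ.eval O n = Part.some 1}) := by
  refine (OCode.partrec_eval hO Γ).of_eq_tot fun n => ?_
  rcases hΓ n with h | h <;> simp [chi, h]

theorem encode_waitZero_mem_jump {A : Set ℕ} {x : ℕ} :
    (OCode.waitZero x).encode ∈ jump A ↔ x ∉ A := by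
  rw [jump, Set.mem_ofPred_eq, OCode.ofNat_encode, OCode.eval_waitZero_dom, chi_eq_zero_iff]

def haltingEnum : Set ℕ :=
  {p | (Code.evaln p.unpair.2 (Denumerable.ofNat Code p.unpair.1) 0).isSome}

theorem proj1_haltingEnum :
    proj1 haltingEnum = {x | (Code.eval (Denumerable.ofNat Code x) 0).Dom} := by
  ext x
  simp only [proj1, haltingEnum, Set.mem_ofPred_eq, Nat.unpair_pair, Option.isSome_iff_exists,
    Part.dom_iff_mem, Code.evaln_complete, Option.mem_def]
  exact exists_comm

theorem computable_chi_haltingEnum : Computable (chi haltingEnum) := by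
  refine computable_chi (ComputablePred.computable_iff.2 ⟨_, ?_, rfl⟩)
  exact (Primrec.option_isSome.comp (Code.primrec_evaln.comp
    (((Primrec.snd.comp Primrec.unpair).pair ((Primrec.ofNat Code).comp
      (Primrec.fst.comp Primrec.unpair))).pair (Primrec.const 0)))).to_comp

/-- The jump operator `A ↦ A′` is not an enumeration operator: no Turing functional `Γ`,
given an arbitrary enumeration `C` of an arbitrary set `A` as oracle, is total with values
in `{0,1}` and computes the characteristic function of an enumeration of `A′`. -/
theorem jump_not_enumeration_operator : ¬ IsEnumOp jump := by
  rintro ⟨Γ, hΓ⟩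
  obtain ⟨hbinary, henum⟩ := hΓ _ haltingEnum rfl
  have hjump_re : REPred (· ∈ jump (proj1 haltingEnum)) := henum ▸
    rePred_mem_proj1 (computable_chi_setOf_eval_eq_one computable_chi_haltingEnum hbinary)
  refine ComputablePred.halting_problem_not_re 0
    ((hjump_re.comp (OCode.computable_encode_waitZero.comp Computable.encode)).of_eq fun c => ?_)
  rw [encode_waitZero_mem_jump, proj1_haltingEnum, Set.mem_ofPred_eq, Denumerable.ofNat_encode]
end

section
/- For any polynomial f ∈ ℤ[X₁,X₂,…], if the measure α(f) of 𝒜(f) = {W ⊆ ℙ : f ∈ HTP(R_W)} equals 0, then 𝒜(f) = ∅, 𝒞(f) = 2^ℙ, and the boundary set ℬ(f) is empty; hence β(f) = μ(ℬ(f)) < 1 always. -/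
/-! A solution of `f` in `R_W` has only finitely many denominators, so it is already a solution
in `R_P` for a finite `P ⊆ W`. Hence `𝒜(f)` contains the whole cylinder `{V | P ⊆ V}` around each
of its points, and cylinders have positive measure: under the binary-digit realisation of `μ`, the
cylinder fixing the first `M` coordinates to `1` contains `[1 - 2⁻ᴹ, 1)`. So `α(f) = 0` forces
`𝒜(f) = ∅`, and then `W = ℙ`, `S₀ = ∅` witnesses that every point lies in `𝒞(f)`. Otherwise `ℬ(f)`
misses a cylinder of positive measure, so `β(f) < 1`. -/

/-- The subring `R_W = ℤ[W⁻¹]` of `ℚ` inverting exactly the primes in `W`. -/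
def ringOf (W : Set ℕ) : Subring ℚ :=
  Subring.closure {x : ℚ | ∃ p ∈ W, x = ((p : ℚ))⁻¹}

/-- Hilbert's Tenth Problem for `R_W`: the set of integer polynomials in the variables
`X₀, X₁, …` having a solution in `R_W`. -/
def HTP (W : Set ℕ) : Set (MvPolynomial ℕ ℤ) :=
  {f | ∃ v : ℕ → ℚ, (∀ n, v n ∈ ringOf W) ∧ MvPolynomial.aeval v f = 0}

/-- A monomial `c · Xᵥ₁^e₁ ⋯ Xᵥⱼ^eⱼ` from a coefficient and a list of (variable, exponent)
pairs. -/
noncomputable def decodeMono (cl : ℤ × List (ℕ × ℕ)) : MvPolynomial ℕ ℤ :=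
  MvPolynomial.C cl.1 * (cl.2.map fun ve => (MvPolynomial.X ve.1) ^ ve.2).prod

/-- A Gödel numbering of the polynomials in `ℤ[X₀, X₁, …]` (every polynomial, written as a
sum of monomials, arises as some `decodePoly n`), coding `HTP(R_W)` as a subset of `ℕ`. -/
noncomputable def decodePoly (n : ℕ) : MvPolynomial ℕ ℤ :=
  ((Denumerable.ofNat (List (ℤ × List (ℕ × ℕ))) n).map decodeMono).sum
open MeasureTheory

/-- The fair-coin (Bernoulli(1/2) product) measure on Cantor space `ℕ → Bool`,
realized as the pushforward of Lebesgue measure on `[0,1)` under the binary-digit map. -/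
noncomputable def cantorMeasure : Measure (ℕ → Bool) :=
  Measure.map (fun x : ℝ => fun n : ℕ => decide (Nat.floor (x * 2 ^ (n + 1)) % 2 = 1))
    (volume.restrict (Set.Ico (0 : ℝ) 1))

/-- Points of the Cantor space `2^ℙ` of sets of primes. -/
abbrev PrimeCantor : Type := {p : ℕ // p.Prime} → Bool

/-- The standard product (fair-coin) measure on `2^ℙ`. -/
noncomputable def primeCantorMeasure : MeasureTheory.Measure PrimeCantor :=
  cantorMeasure.map (fun x : ℕ → Bool => fun p : {p : ℕ // p.Prime} => x (Nat.count Nat.Prime p.1))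

/-- The set of primes coded by a point of `2^ℙ`. -/
def toSet (W : PrimeCantor) : Set ℕ := {n | ∃ h : n.Prime, W ⟨n, h⟩ = true}

/-- `𝒜(f)`: the class of `W ⊆ ℙ` such that `f` has a solution in `R_W = ℤ[W⁻¹]`. -/
def Acl (f : MvPolynomial ℕ ℤ) : Set PrimeCantor := {W | f ∈ HTP (toSet W)}

/-- `𝒞(f)`: the class of `W ⊆ ℙ` for which some finite set `S₀ ⊆ ℙ ∖ W` of non-inverted
primes already rules out any solution: `f ∉ HTP(R_{ℙ∖S₀})`. -/
def Ccl (f : MvPolynomial ℕ ℤ) : Set PrimeCantor :=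
  {W | ∃ S : Finset {p : ℕ // p.Prime}, (∀ p ∈ S, W p = false) ∧
        f ∉ HTP ({q : ℕ | q.Prime} \ ↑(S.image Subtype.val))}

/-- `ℬ(f) = 2^ℙ − 𝒜(f) − 𝒞(f)`, the boundary set of `f`. -/
def Bcl (f : MvPolynomial ℕ ℤ) : Set PrimeCantor := (Set.univ \ Acl f) \ Ccl f

lemma ringOf_mono {W W' : Set ℕ} (h : W ⊆ W') : ringOf W ≤ ringOf W' :=
  Subring.closure_mono fun _ ⟨p, hp, hx⟩ => ⟨p, h hp, hx⟩

lemma HTP_mono {W W' : Set ℕ} (h : W ⊆ W') : HTP W ⊆ HTP W' :=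
  fun _ ⟨v, hv, hf⟩ => ⟨v, fun n => ringOf_mono h (hv n), hf⟩

lemma ringOf_eq_iSup_finset (W : Set ℕ) :
    ringOf W = ⨆ P : {P : Finset ℕ // ↑P ⊆ W}, ringOf P := by
  simp only [ringOf]
  rw [← Subring.closure_iUnion]
  congr 1
  ext x
  simp only [Set.mem_iUnion, Finset.mem_coe, Subtype.exists]
  constructor
  · rintro ⟨p, hp, rfl⟩
    exact ⟨{p}, by simpa using hp, p, Finset.mem_singleton_self p, rfl⟩
  · rintro ⟨P, hP, p, hp, rfl⟩
    exact ⟨p, hP hp, rfl⟩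

lemma exists_finset_subset_of_mem_ringOf {W : Set ℕ} {x : ℚ} (hx : x ∈ ringOf W) :
    ∃ P : Finset ℕ, ↑P ⊆ W ∧ x ∈ ringOf P := by
  have : Nonempty {P : Finset ℕ // ↑P ⊆ W} := ⟨⟨∅, by simp⟩⟩
  rw [ringOf_eq_iSup_finset, Subring.mem_iSup_of_directed] at hx
  · obtain ⟨⟨P, hP⟩, hxP⟩ := hx
    exact ⟨P, hP, hxP⟩
  · rintro ⟨P, hP⟩ ⟨Q, hQ⟩
    refine ⟨⟨P ∪ Q, by simpa using And.intro hP hQ⟩, ringOf_mono ?_, ringOf_mono ?_⟩ <;> simp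

lemma exists_finset_subset_of_mem_HTP {W : Set ℕ} {f : MvPolynomial ℕ ℤ} (hf : f ∈ HTP W) :
    ∃ P : Finset ℕ, ↑P ⊆ W ∧ f ∈ HTP P := by
  obtain ⟨v, hv, hfv⟩ := hf
  choose P hPW hvP using fun n => exists_finset_subset_of_mem_ringOf (hv n)
  refine ⟨f.vars.sup P, fun p hp => ?_, ?_⟩
  · obtain ⟨n, -, hpn⟩ := Finset.mem_sup.mp hp
    exact hPW n hpn
  refine ⟨fun n => if n ∈ f.vars then v n else 0, fun n => ?_, ?_⟩
  · dsimp only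
    split_ifs with hn
    · exact ringOf_mono (by simpa using Finset.le_sup (f := P) hn) (hvP n)
    · exact zero_mem _
  · rw [← hfv, MvPolynomial.aeval_def, MvPolynomial.aeval_def]
    exact MvPolynomial.eval₂Hom_congr' rfl (fun n hn _ => if_pos hn) rfl

def primeCylinder (S : Finset {p : ℕ // p.Prime}) : Set PrimeCantor :=
  {V | ∀ p ∈ S, V p = true}

lemma measurableSet_primeCylinder (S : Finset {p : ℕ // p.Prime}) :
    MeasurableSet (primeCylinder S) := by
  have : primeCylinder S = ⋂ p ∈ S, (fun V : PrimeCantor => V p) ⁻¹' {true} := by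
    ext V; simp [primeCylinder]
  rw [this]
  exact .biInter S.countable_toSet fun p _ => measurable_pi_apply p (measurableSet_singleton _)

lemma exists_primeCylinder_subset_Acl {f : MvPolynomial ℕ ℤ} {W : PrimeCantor}
    (hW : W ∈ Acl f) : ∃ S, primeCylinder S ⊆ Acl f := by
  obtain ⟨P, hPW, hfP⟩ := exists_finset_subset_of_mem_HTP hW
  refine ⟨P.subtype Nat.Prime, fun V hV => HTP_mono (fun p hp => ?_) hfP⟩
  obtain ⟨hp', -⟩ := hPW hp
  exact ⟨hp', hV ⟨p, hp'⟩ (Finset.mem_subtype.mpr hp)⟩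

lemma measurable_binaryDigits :
    Measurable fun x : ℝ => fun n : ℕ => decide (Nat.floor (x * 2 ^ (n + 1)) % 2 = 1) :=
  measurable_pi_lambda _ fun _ =>
    (measurable_from_top (f := fun k : ℕ => decide (k % 2 = 1))).comp
      (measurable_id.mul_const _).nat_floor

lemma measurable_restrictToPrimes :
    Measurable fun x : ℕ → Bool => fun p : {p : ℕ // p.Prime} => x (Nat.count Nat.Prime p.1) :=
  measurable_pi_lambda _ fun _ => measurable_pi_apply _

instance : IsProbabilityMeasure (volume.restrict (Set.Ico (0 : ℝ) 1)) :=
  ⟨by simp⟩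

instance : IsProbabilityMeasure cantorMeasure :=
  Measure.isProbabilityMeasure_map measurable_binaryDigits.aemeasurable

instance : IsProbabilityMeasure primeCantorMeasure :=
  Measure.isProbabilityMeasure_map measurable_restrictToPrimes.aemeasurable

lemma floor_mul_two_pow_eq {M k : ℕ} (hk : k ≤ M) {t : ℝ}
    (ht : t ∈ Set.Ico (1 - 1 / 2 ^ M : ℝ) 1) :
    ⌊t * 2 ^ k⌋₊ = 2 ^ k - 1 := by
  obtain ⟨h1, h2⟩ := ht
  have hpos : (0 : ℝ) < 2 ^ k := by positivity
  have hkM : 1 / 2 ^ M * (2 : ℝ) ^ k ≤ 1 := by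
    rw [one_div_mul_eq_div, div_le_one (by positivity)]
    exact pow_le_pow_right₀ one_le_two hk
  have hM : 1 / (2 : ℝ) ^ M ≤ 1 := by
    rw [div_le_one (by positivity)]
    exact one_le_pow₀ one_le_two
  have h0 : (0 : ℝ) ≤ t * 2 ^ k := mul_nonneg (by linarith) hpos.le
  rw [Nat.floor_eq_iff h0, Nat.cast_sub Nat.one_le_two_pow]
  push_cast
  constructor
  · nlinarith [mul_le_mul_of_nonneg_right h1 hpos.le]
  · nlinarith

lemma cantorMeasure_initial_ones_pos (M : ℕ) :
    0 < cantorMeasure {x | ∀ n < M, x n = true} := by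
  have hsub : Set.Ico (1 - 1 / 2 ^ M : ℝ) 1 ⊆ Set.Ico 0 1 :=
    Set.Ico_subset_Ico_left <|
      sub_nonneg.2 (div_le_one_of_le₀ (one_le_pow₀ one_le_two) (by positivity))
  have hdigits : Set.Ico (1 - 1 / 2 ^ M : ℝ) 1 ⊆
      (fun x : ℝ => fun n : ℕ => decide (Nat.floor (x * 2 ^ (n + 1)) % 2 = 1)) ⁻¹'
        {x | ∀ n < M, x n = true} := by
    intro t ht n hn
    simp only [decide_eq_true_eq]
    rw [floor_mul_two_pow_eq hn ht, Nat.two_pow_sub_one_mod_two]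
    simp
  calc (0 : ENNReal) < volume (Set.Ico (1 - 1 / 2 ^ M : ℝ) 1) := by simp [Real.volume_Ico]
    _ = volume.restrict (Set.Ico (0 : ℝ) 1) (Set.Ico (1 - 1 / 2 ^ M : ℝ) 1) :=
      (Measure.restrict_eq_self _ hsub).symm
    _ ≤ _ := (measure_mono hdigits).trans
      (Measure.le_map_apply measurable_binaryDigits.aemeasurable _)

lemma primeCantorMeasure_primeCylinder_pos (S : Finset {p : ℕ // p.Prime}) :
    0 < primeCantorMeasure (primeCylinder S) := by
  set M := S.sup fun p => Nat.count Nat.Prime p + 1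
  have hsub : {x : ℕ → Bool | ∀ n < M, x n = true} ⊆
      (fun x : ℕ → Bool => fun p : {p : ℕ // p.Prime} => x (Nat.count Nat.Prime p.1)) ⁻¹'
        primeCylinder S :=
    fun x hx p hp => hx _ <|
      Finset.le_sup (f := fun p : {p : ℕ // p.Prime} => Nat.count Nat.Prime p + 1) hp
  calc 0 < cantorMeasure {x | ∀ n < M, x n = true} := cantorMeasure_initial_ones_pos M
    _ ≤ _ := (measure_mono hsub).trans
      (Measure.le_map_apply measurable_restrictToPrimes.aemeasurable _)

lemma Acl_eq_empty_of_measure_eq_zero {f : MvPolynomial ℕ ℤ}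
    (h : primeCantorMeasure (Acl f) = 0) : Acl f = ∅ :=
  Set.eq_empty_of_forall_notMem fun _ hW =>
    let ⟨S, hS⟩ := exists_primeCylinder_subset_Acl hW
    (primeCantorMeasure_primeCylinder_pos S).ne' (measure_mono_null hS h)

lemma Ccl_eq_univ_of_Acl_eq_empty {f : MvPolynomial ℕ ℤ} (h : Acl f = ∅) : Ccl f = Set.univ := by
  refine Set.eq_univ_of_forall fun _ => ⟨∅, by simp, fun hf => ?_⟩
  have : (fun _ => true : PrimeCantor) ∈ Acl f := by
    simpa [Acl, toSet] using hf
  simp [h] at this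

lemma Bcl_eq_empty_of_Acl_eq_empty {f : MvPolynomial ℕ ℤ} (h : Acl f = ∅) : Bcl f = ∅ := by
  simp [Bcl, Ccl_eq_univ_of_Acl_eq_empty h]

/-- If `α(f) = μ(𝒜(f)) = 0` then `𝒜(f) = ∅`, `𝒞(f) = 2^ℙ` and `ℬ(f) = ∅`;
hence `β(f) = μ(ℬ(f)) < 1` always. -/
theorem boundary_measure_lt_one (f : MvPolynomial ℕ ℤ) :
    (primeCantorMeasure (Acl f) = 0 →
      Acl f = ∅ ∧ Ccl f = Set.univ ∧ Bcl f = ∅) ∧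
    primeCantorMeasure (Bcl f) < 1 := by
  refine ⟨fun h0 => ?_, ?_⟩
  · have hA := Acl_eq_empty_of_measure_eq_zero h0
    exact ⟨hA, Ccl_eq_univ_of_Acl_eq_empty hA, Bcl_eq_empty_of_Acl_eq_empty hA⟩
  rcases (Acl f).eq_empty_or_nonempty with hA | ⟨W, hW⟩
  · simp [Bcl_eq_empty_of_Acl_eq_empty hA]
  obtain ⟨S, hS⟩ := exists_primeCylinder_subset_Acl hW
  calc primeCantorMeasure (Bcl f) ≤ primeCantorMeasure (primeCylinder S)ᶜ :=
        measure_mono fun V hV hVS => hV.1.2 (hS hVS)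
    _ = 1 - primeCantorMeasure (primeCylinder S) :=
        prob_compl_eq_one_sub (measurableSet_primeCylinder S)
    _ < 1 := ENNReal.sub_lt_self ENNReal.one_ne_top one_ne_zero
        (primeCantorMeasure_primeCylinder_pos S).ne'
end

section
/- Let ⟨q_s⟩ be a strictly increasing sequence of positive rationals with limit r < 1. Define n₀ as the least integer with 2^{−n₀} ≤ q₀ and recursively n_{k+1} as the least n with (1 − 2^{−n})·∏_{i≤k}(1 − 2^{−n_i}) ≥ 1 − q_{k+1}. Then each n_{k+1} exists, is positive, and ∏_{k≥0}(1 − 2^{−n_k}) = 1 − r. -/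
/-!
Write `P_k = ∏_{i<k} (1 - 2^{-n_i})` and `t_k = 1 - q_k`, so that `n_k` is the least `m` with
`t_k ≤ (1 - 2^{-m}) P_k`. Since `t_k` decreases, `t_{k+1} < t_k ≤ P_{k+1}` keeps the choice of
`n_{k+1}` possible, and `P_k` decreases to some limit `L ≥ lim t_k = 1 - r`. Minimality of
`n_k ≥ 1` says that `n_k - 1` fails, i.e. `t_k > (1 - 2 · 2^{-n_k}) P_k = 2 P_{k+1} - P_k`;
in the limit this gives `1 - r ≥ 2L - L = L`.
-/

open Filter Finset

noncomputable def minExponent (t P : ℝ) : ℕ :=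
  sInf {m : ℕ | t ≤ (1 - (2 : ℝ) ^ (-(m : ℤ))) * P}

section minExponent

variable {t P : ℝ}

lemma exists_le_one_sub_two_zpow_mul (hP : 0 < P) (htP : t < P) :
    ∃ m : ℕ, t ≤ (1 - (2 : ℝ) ^ (-(m : ℤ))) * P := by
  obtain ⟨m, hm⟩ := exists_pow_lt_of_lt_one (div_pos (sub_pos.2 htP) hP)
    (by norm_num : (2⁻¹ : ℝ) < 1)
  refine ⟨m, ?_⟩
  rw [lt_div_iff₀ hP, inv_pow] at hm
  rw [zpow_neg, zpow_natCast, sub_mul, one_mul]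
  linarith

lemma isLeast_minExponent (hP : 0 < P) (htP : t < P) :
    IsLeast {m : ℕ | t ≤ (1 - (2 : ℝ) ^ (-(m : ℤ))) * P} (minExponent t P) :=
  ⟨Nat.sInf_mem (exists_le_one_sub_two_zpow_mul hP htP), fun _ hm => Nat.sInf_le hm⟩

lemma minExponent_pos (ht : 0 < t) (htP : t < P) : 0 < minExponent t P := by
  have hmem := (isLeast_minExponent (ht.trans htP) htP).1
  refine Nat.pos_of_ne_zero fun h => ?_
  simp only [Set.mem_ofPred_eq, h, Nat.cast_zero, neg_zero, zpow_zero, sub_self,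
    zero_mul] at hmem
  linarith

lemma two_mul_one_sub_two_zpow_minExponent_mul_sub_lt (ht : 0 < t) (htP : t < P) :
    2 * ((1 - (2 : ℝ) ^ (-(minExponent t P : ℤ))) * P) - P < t := by
  obtain ⟨j, hj⟩ := Nat.exists_eq_add_one_of_ne_zero (minExponent_pos ht htP).ne'
  have hfail : j ∉ {m : ℕ | t ≤ (1 - (2 : ℝ) ^ (-(m : ℤ))) * P} := fun hmem => by
    have := (isLeast_minExponent (ht.trans htP) htP).2 hmem
    omega
  have hdouble : (2 : ℝ) ^ (-(j : ℤ)) = 2 * (2 : ℝ) ^ (-((j + 1 : ℕ) : ℤ)) := by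
    rw [Nat.cast_succ, neg_add, zpow_add₀ two_ne_zero, zpow_neg_one]
    ring
  simp only [Set.mem_ofPred_eq, not_le, hdouble] at hfail
  rw [hj]
  linarith

end minExponent

variable (t : ℕ → ℝ)

noncomputable def greedyProduct : ℕ → ℝ
  | 0 => 1
  | k + 1 => (1 - (2 : ℝ) ^ (-(minExponent (t k) (greedyProduct k) : ℤ))) * greedyProduct k

noncomputable def greedyExponent (k : ℕ) : ℕ :=
  minExponent (t k) (greedyProduct t k)

lemma greedyProduct_succ (k : ℕ) :
    greedyProduct t (k + 1) = (1 - (2 : ℝ) ^ (-(greedyExponent t k : ℤ))) * greedyProduct t k :=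
  rfl

lemma greedyProduct_eq_prod (k : ℕ) :
    greedyProduct t k = ∏ i ∈ range k, (1 - (2 : ℝ) ^ (-(greedyExponent t i : ℤ))) := by
  induction k with
  | zero => rfl
  | succ k ih => rw [greedyProduct_succ, prod_range_succ, ih, mul_comm]

section greedy

variable {t} (ht : ∀ k, 0 < t k) (hanti : StrictAnti t) (h0 : t 0 < 1)
include ht hanti h0

lemma lt_greedyProduct : ∀ k, t k < greedyProduct t k
  | 0 => h0
  | k + 1 => (hanti k.lt_succ_self).trans_le
      (isLeast_minExponent ((ht k).trans (lt_greedyProduct k)) (lt_greedyProduct k)).1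

lemma isLeast_greedyExponent (k : ℕ) :
    IsLeast {m : ℕ | t k ≤ (1 - (2 : ℝ) ^ (-(m : ℤ))) * greedyProduct t k}
      (greedyExponent t k) :=
  isLeast_minExponent ((ht k).trans (lt_greedyProduct ht hanti h0 k))
    (lt_greedyProduct ht hanti h0 k)

lemma greedyExponent_pos (k : ℕ) : 0 < greedyExponent t k :=
  minExponent_pos (ht k) (lt_greedyProduct ht hanti h0 k)

lemma greedyProduct_antitone : Antitone (greedyProduct t) := by
  refine antitone_nat_of_succ_le fun k => ?_
  rw [greedyProduct_succ]
  exact mul_le_of_le_one_left ((ht k).trans (lt_greedyProduct ht hanti h0 k)).le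
    (sub_le_self _ (by positivity))

lemma tendsto_greedyProduct {ℓ : ℝ} (hlim : Tendsto t atTop (nhds ℓ)) :
    Tendsto (greedyProduct t) atTop (nhds ℓ) := by
  have hP := lt_greedyProduct ht hanti h0
  obtain ⟨L, hL⟩ : ∃ L, Tendsto (greedyProduct t) atTop (nhds L) :=
    ⟨_, tendsto_atTop_ciInf (greedyProduct_antitone ht hanti h0)
      ⟨0, by rintro _ ⟨k, rfl⟩; exact ((ht k).trans (hP k)).le⟩⟩
  have hL₁ := hL.comp (tendsto_add_atTop_nat 1)
  have hlower : ℓ ≤ L := le_of_tendsto_of_tendsto' hlim hL₁ fun k =>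
    (isLeast_greedyExponent ht hanti h0 k).1
  have hupper : 2 * L - L ≤ ℓ := le_of_tendsto_of_tendsto' ((hL₁.const_mul 2).sub hL) hlim
    fun k => (two_mul_one_sub_two_zpow_minExponent_mul_sub_lt (ht k) (hP k)).le
  rwa [← le_antisymm (by linarith) hlower]

end greedy

/-- Given a strictly increasing sequence of positive rationals `q_s → r < 1`, the recursively
defined minimal exponents `n₀` (least with `2^{−n₀} ≤ q₀`) and `n_{k+1}` (least `n` with
`(1 − 2^{−n})·∏_{i≤k}(1 − 2^{−n_i}) ≥ 1 − q_{k+1}`) all exist, each `n_{k+1}` is positive,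
and `∏_{k}(1 − 2^{−n_k}) = 1 − r`. -/
theorem minimal_exponents_product_eq
    (q : ℕ → ℚ) (hpos : ∀ s, 0 < q s) (hmono : StrictMono q)
    (r : ℝ) (hlim : Tendsto (fun s => (q s : ℝ)) atTop (nhds r)) (hr : r < 1) :
    ∃ n : ℕ → ℕ,
      IsLeast {m : ℕ | (2 : ℝ) ^ (-(m : ℤ)) ≤ (q 0 : ℝ)} (n 0) ∧
      (∀ k, IsLeast {m : ℕ |
          1 - (q (k + 1) : ℝ) ≤ (1 - (2 : ℝ) ^ (-(m : ℤ))) *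
            ∏ i ∈ Finset.range (k + 1), (1 - (2 : ℝ) ^ (-(n i : ℤ)))} (n (k + 1))) ∧
      (∀ k, 0 < n (k + 1)) ∧
      Tendsto (fun K => ∏ k ∈ Finset.range K, (1 - (2 : ℝ) ^ (-(n k : ℤ)))) atTop
        (nhds (1 - r)) := by
  let t : ℕ → ℝ := fun k => 1 - (q k : ℝ)
  have hqr : Monotone (fun s => (q s : ℝ)) := fun _ _ h => Rat.cast_le.2 (hmono.monotone h)
  have ht : ∀ k, 0 < t k := fun k => by linarith [hqr.ge_of_tendsto hlim k]
  have hanti : StrictAnti t := fun a b h => by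
    have : (q a : ℝ) < q b := by exact_mod_cast hmono h
    simp only [t]
    linarith
  have h0 : t 0 < 1 := by simp only [t]; linarith [show (0 : ℝ) < q 0 by exact_mod_cast hpos 0]
  have hprod := funext (greedyProduct_eq_prod t)
  refine ⟨greedyExponent t, ?_, fun k => ?_, fun k => greedyExponent_pos ht hanti h0 _, ?_⟩
  · convert isLeast_greedyExponent ht hanti h0 0 using 2
    simp only [t, greedyProduct, mul_one, sub_le_sub_iff_left]
  · simpa only [hprod] using isLeast_greedyExponent ht hanti h0 (k + 1)
  · simpa only [hprod] using tendsto_greedyProduct ht hanti h0 (tendsto_const_nhds.sub hlim)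
end
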